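/- arXiv:2412.10223 — 3 statements merged into one kernel-verified Lean document; each statement's English description precedes it below -/
import Mathlib

section
/- Fix a permutation π of V. For every J ∈ V, the group algebra element F̄_J is a unit of order at most two: F̄_J * F̄_J = 1 in AddMonoidAlgebra ℝ V. -/
/-!
The elements `e_x = 2⁻ⁿ • ∑_g (-1)^{g·x} δ_g` (`x ∈ V`) form a complete family of orthogonal
idempotents of `ℝ[V]`: this is the orthogonality of the characters `g ↦ (-1)^{g·x}` of `V`.
Expanding the definition of `a^J_g` gives `F̄_J = ∑_x (-1)^{π(x)·J} • e_x`, and a combination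
of complete orthogonal idempotents with coefficients `±1` squares to `∑_x e_x = 1`.
-/

open Finset

/-- The sign (-1)^{u·v} ∈ ℝ. -/
noncomputable def sgn {n : ℕ} (u v : Fin n → ZMod 2) : ℝ :=
  if (∑ i, u i * v i) = (1 : ZMod 2) then -1 else 1

/-- Fourier coefficient a^J_I, for a permutation π of V = Fin n → ZMod 2. -/
noncomputable def fc {n : ℕ} (π : Equiv.Perm (Fin n → ZMod 2))
    (J I : Fin n → ZMod 2) : ℝ :=
  (1 / 2 ^ n) * ∑ x : Fin n → ZMod 2, sgn I x * sgn (π x) J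

/-- The group algebra element F̄_J ∈ AddMonoidAlgebra ℝ V whose coefficient at g is a^J_g. -/
noncomputable def Fbar {n : ℕ} (π : Equiv.Perm (Fin n → ZMod 2))
    (J : Fin n → ZMod 2) : AddMonoidAlgebra ℝ (Fin n → ZMod 2) :=
  ∑ g : Fin n → ZMod 2, AddMonoidAlgebra.single g (fc π J g)

theorem OrthogonalIdempotents.sum_smul_mul_sum_smul {R A I : Type*} [CommSemiring R]
    [Semiring A] [Algebra R A] {e : I → A} (he : OrthogonalIdempotents e) (s : Finset I)
    (c d : I → R) :
    (∑ i ∈ s, c i • e i) * (∑ i ∈ s, d i • e i) = ∑ i ∈ s, (c i * d i) • e i := by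
  classical
  simp [Finset.sum_mul_sum, he.mul_eq, smul_ite, smul_smul, mul_comm]

theorem CompleteOrthogonalIdempotents.sum_smul_mul_self_eq_one {R A I : Type*} [CommSemiring R]
    [Semiring A] [Algebra R A] [Fintype I] {e : I → A} (he : CompleteOrthogonalIdempotents e)
    {c : I → R} (hc : ∀ i, c i * c i = 1) :
    (∑ i, c i • e i) * (∑ i, c i • e i) = 1 := by
  simp only [he.sum_smul_mul_sum_smul, hc, one_smul, he.complete]

section Walsh

variable {n : ℕ}

theorem sgn_eq_zmodChar (u v : Fin n → ZMod 2) :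
    sgn u v = AddChar.zmodChar 2 (by norm_num : (-1 : ℝ) ^ 2 = 1) (u ⬝ᵥ v) := by
  rw [sgn, AddChar.zmodChar_apply, dotProduct]
  generalize ∑ i, u i * v i = a
  obtain rfl | rfl : a = 0 ∨ a = 1 := by decide +revert
  all_goals simp [ZMod.val_one]

theorem sgn_comm (u v : Fin n → ZMod 2) : sgn u v = sgn v u := by
  simp only [sgn_eq_zmodChar, dotProduct_comm]

theorem sgn_add_left (u v w : Fin n → ZMod 2) : sgn (u + v) w = sgn u w * sgn v w := by
  simp only [sgn_eq_zmodChar, add_dotProduct, AddChar.map_add_eq_mul]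

theorem sgn_add_right (u v w : Fin n → ZMod 2) : sgn u (v + w) = sgn u v * sgn u w := by
  simp only [sgn_comm u, sgn_add_left]

theorem sgn_mul_self (u v : Fin n → ZMod 2) : sgn u v * sgn u v = 1 := by
  unfold sgn; split <;> norm_num

theorem add_eq_zero_iff_eq_of_zmod_two (x y : Fin n → ZMod 2) : x + y = 0 ↔ x = y := by
  rw [add_eq_zero_iff_eq_neg, show -y = y from funext fun i => ZMod.neg_eq_self_mod_two (y i)]

noncomputable def sgnChar (x : Fin n → ZMod 2) : AddChar (Fin n → ZMod 2) ℝ where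
  toFun g := sgn g x
  map_zero_eq_one' := by simp [sgn_eq_zmodChar]
  map_add_eq_mul' g h := sgn_add_left g h x

theorem sgnChar_eq_zero_iff (x : Fin n → ZMod 2) : sgnChar x = 0 ↔ x = 0 := by
  refine ⟨fun h => funext fun i => ?_, fun hx => ?_⟩
  · by_contra hi
    have hxi : x i = 1 := (by decide : ∀ a : ZMod 2, a ≠ 0 → a = 1) _ hi
    have := DFunLike.congr_fun h (Pi.single i 1)
    norm_num [sgnChar, sgn_eq_zmodChar, single_dotProduct, hxi, AddChar.zmodChar_apply,
      ZMod.val_one] at this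
  · ext g
    simp [sgnChar, sgn_eq_zmodChar, hx]

theorem sum_sgn (x : Fin n → ZMod 2) :
    ∑ g, sgn g x = if x = 0 then (2 ^ n : ℝ) else 0 := by
  classical
  exact (sgnChar x).sum_eq_ite.trans (by simp [sgnChar_eq_zero_iff])

noncomputable def walsh (x : Fin n → ZMod 2) : AddMonoidAlgebra ℝ (Fin n → ZMod 2) :=
  ∑ g, AddMonoidAlgebra.single g (sgn g x)

theorem single_mul_walsh (g x : Fin n → ZMod 2) (r : ℝ) :
    AddMonoidAlgebra.single g r * walsh x = (r * sgn g x) • walsh x := by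
  simp only [walsh, Finset.mul_sum, Finset.smul_sum, AddMonoidAlgebra.single_mul_single,
    AddMonoidAlgebra.smul_single, smul_eq_mul]
  refine Fintype.sum_equiv (Equiv.addLeft g) _ _ fun h => ?_
  rw [Equiv.coe_addLeft, sgn_add_left]
  congr 1
  linear_combination (-(r * sgn h x)) * sgn_mul_self g x

theorem walsh_mul_walsh (x y : Fin n → ZMod 2) :
    walsh x * walsh y = if x = y then (2 ^ n : ℝ) • walsh x else 0 := by
  calc walsh x * walsh y = ∑ g, (sgn g x * sgn g y) • walsh y := by
        rw [walsh, Finset.sum_mul]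
        simp only [single_mul_walsh]
    _ = (∑ g, sgn g (x + y)) • walsh y := by simp only [sgn_add_right, Finset.sum_smul]
    _ = _ := by
        simp only [sum_sgn, add_eq_zero_iff_eq_of_zmod_two]
        split_ifs with hxy
        · rw [hxy]
        · exact zero_smul _ _

theorem sum_walsh : ∑ x : Fin n → ZMod 2, walsh x = (2 ^ n : ℝ) • 1 := by
  calc ∑ x, walsh x = ∑ g, AddMonoidAlgebra.single g (∑ x, sgn g x) := by
        simp only [walsh, ← AddMonoidAlgebra.singleAddHom_apply, map_sum]
        exact Finset.sum_comm
    _ = AddMonoidAlgebra.single 0 (2 ^ n : ℝ) := by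
        rw [Finset.sum_eq_single 0 (fun g _ hg => ?_) (by simp)]
        · simp only [sgn_comm 0, sum_sgn, if_true]
        · rw [← AddMonoidAlgebra.single_zero g]
          congr 1
          simp only [sgn_comm g, sum_sgn, if_neg hg]
    _ = _ := by rw [AddMonoidAlgebra.one_def, AddMonoidAlgebra.smul_single, smul_eq_mul, mul_one]

theorem completeOrthogonalIdempotents_walsh :
    CompleteOrthogonalIdempotents fun x : Fin n → ZMod 2 => (2 ^ n : ℝ)⁻¹ • walsh x := by
  have h2n : (2 ^ n : ℝ) ≠ 0 := by positivity
  refine ⟨⟨fun x => ?_, fun x y hxy => ?_⟩, ?_⟩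
  · rw [IsIdempotentElem, smul_mul_smul_comm, walsh_mul_walsh, if_pos rfl, smul_smul]
    field_simp
  · simp only [smul_mul_smul_comm, walsh_mul_walsh, if_neg hxy, smul_zero]
  · rw [← Finset.smul_sum, sum_walsh, smul_smul, inv_mul_cancel₀ h2n, one_smul]

theorem Fbar_eq_sum_smul_walsh (π : Equiv.Perm (Fin n → ZMod 2)) (J : Fin n → ZMod 2) :
    Fbar π J = ∑ x, sgn (π x) J • (2 ^ n : ℝ)⁻¹ • walsh x := by
  simp only [Fbar, fc, walsh, Finset.smul_sum, AddMonoidAlgebra.smul_single, smul_eq_mul]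
  rw [Finset.sum_comm]
  refine Finset.sum_congr rfl fun g _ => ?_
  simp only [← AddMonoidAlgebra.singleAddHom_apply, ← map_sum, Finset.mul_sum]
  exact congrArg _ <| Finset.sum_congr rfl fun x _ => by ring

end Walsh

theorem Fbar_sq_eq_one_general {n : ℕ} (π : Equiv.Perm (Fin n → ZMod 2))
    (J : Fin n → ZMod 2) : Fbar π J * Fbar π J = 1 := by
  rw [Fbar_eq_sum_smul_walsh]
  exact completeOrthogonalIdempotents_walsh.sum_smul_mul_self_eq_one fun x => sgn_mul_self _ _

/-- Each F̄_J is a unit of order at most two in the group algebra. -/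
theorem Fbar_sq_eq_one {n : ℕ} (hn : 1 ≤ n) (π : Equiv.Perm (Fin n → ZMod 2))
    (J : Fin n → ZMod 2) : Fbar π J * Fbar π J = 1 :=
  Fbar_sq_eq_one_general π J
end

section
/- Fix a permutation π of V, J ∈ V, and an integer m ≥ 1. Suppose a^J_I = 0 for every I ∈ V with Hamming weight |I| > m. Then every nonzero coefficient is bounded below in absolute value: for every g ∈ V, if a^J_g ≠ 0 then |a^J_g| ≥ 1 / 2^{m−1}. -/
/-!
Write `F x = (-1)^(π x ⬝ᵥ J) = 1 - 2 f x` with `f` Boolean. Then `a^J_I = W_F(supp I) / 2^n` for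
the integer Walsh sums `W_F(S) = ∑ₓ F x χ_S(x)`. For any integer-valued `f`, the superset sum
`∑_{T ⊇ S} W_f(T) = ∑ₓ f x χ_S(x) ∏_{i ∉ S} (1 + (-1)^{x i})` is divisible by `2^(n - |S|)`;
so if `W_f` vanishes above level `m`, downward induction on `S` gives `2^(n - m) ∣ W_f(S)` for
all `S`. Hence `2^(n - m + 1)` divides `W_F(S) = 2^n [S = ∅] - 2 W_f(S)`, and a nonzero
coefficient is at least `2^(n - m + 1) / 2^n` in absolute value.
-/

open Finset

/-- Hamming weight of an n-bit vector. -/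
def wt {n : ℕ} (v : Fin n → ZMod 2) : ℕ :=
  (Finset.univ.filter (fun i => v i = 1)).card

open Matrix

lemma AddChar.map_sum_eq_prod {ι A M : Type*} [AddCommMonoid A] [CommMonoid M]
    (ψ : AddChar A M) (s : Finset ι) (f : ι → A) : ψ (∑ i ∈ s, f i) = ∏ i ∈ s, ψ (f i) := by
  classical
  induction s using Finset.induction_on with
  | empty => simp
  | insert i s hi ih => rw [sum_insert hi, prod_insert hi, AddChar.map_add_eq_mul, ih]

lemma one_div_two_pow_le_abs_div_two_pow {k : ℤ} {d n : ℕ} (hk : k ≠ 0)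
    (hdvd : 2 ^ (n - d) ∣ k) : 1 / 2 ^ d ≤ |(k : ℝ) / 2 ^ n| := by
  have hk : (2 : ℝ) ^ (n - d) ≤ |(k : ℝ)| := by
    exact_mod_cast Int.le_of_dvd (abs_pos.2 hk) ((dvd_abs _ _).2 hdvd)
  rw [abs_div, abs_of_pos (by positivity : (0 : ℝ) < 2 ^ n),
    div_le_div_iff₀ (by positivity) (by positivity), one_mul]
  calc (2 : ℝ) ^ n ≤ 2 ^ (n - d) * 2 ^ d := by
        rw [← pow_add]; exact pow_le_pow_right₀ one_le_two (by omega)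
    _ ≤ |(k : ℝ)| * 2 ^ d := by gcongr

namespace BooleanFourier

lemma zmod_two_eq_zero_or_one (z : ZMod 2) : z = 0 ∨ z = 1 := by
  revert z
  decide

def signChar : AddChar (ZMod 2) ℤ := AddChar.zmodChar 2 (by norm_num : (-1 : ℤ) ^ 2 = 1)

lemma signChar_one : signChar 1 = -1 := rfl

lemma signChar_eq_one_sub_two_mul_val (z : ZMod 2) : signChar z = 1 - 2 * z.val := by
  fin_cases z <;> rfl

lemma two_dvd_one_add_signChar (z : ZMod 2) : 2 ∣ 1 + signChar z :=
  ⟨1 - z.val, by rw [signChar_eq_one_sub_two_mul_val]; ring⟩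

variable {ι : Type*}

def walsh (S : Finset ι) : AddChar (ι → ZMod 2) ℤ :=
  ∑ i ∈ S, signChar.compAddMonoidHom (Pi.evalAddMonoidHom (fun _ => ZMod 2) i)

lemma walsh_apply (S : Finset ι) (x : ι → ZMod 2) : walsh S x = ∏ i ∈ S, signChar (x i) :=
  AddChar.sum_apply _ _ _

lemma walsh_apply_eq_signChar_sum (S : Finset ι) (x : ι → ZMod 2) :
    walsh S x = signChar (∑ i ∈ S, x i) := by
  rw [walsh_apply, AddChar.map_sum_eq_prod]

lemma walsh_ne_zero [DecidableEq ι] {S : Finset ι} (hS : S.Nonempty) : walsh S ≠ 0 := by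
  obtain ⟨j, hj⟩ := hS
  refine AddChar.ne_zero_iff.2 ⟨Pi.single j 1, ?_⟩
  rw [walsh_apply, prod_eq_single j (fun i _ hij => by simp [hij]) (absurd hj),
    Pi.single_eq_same, signChar_one]
  decide

def supp [Fintype ι] (v : ι → ZMod 2) : Finset ι := univ.filter (v · = 1)

lemma dotProduct_eq_sum_supp [Fintype ι] (u x : ι → ZMod 2) : u ⬝ᵥ x = ∑ i ∈ supp u, x i := by
  rw [supp, sum_filter, dotProduct]
  refine sum_congr rfl fun i _ => ?_
  obtain h | h := zmod_two_eq_zero_or_one (u i) <;> simp [h]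

variable [Fintype ι] [DecidableEq ι]

lemma supp_surjective : Function.Surjective (supp : (ι → ZMod 2) → Finset ι) := fun T =>
  ⟨fun i => if i ∈ T then 1 else 0, by ext i; by_cases hi : i ∈ T <;> simp [supp, hi]⟩

lemma sum_walsh (S : Finset ι) :
    ∑ x, walsh S x = if S = ∅ then (2 : ℤ) ^ Fintype.card ι else 0 := by
  obtain rfl | hS := S.eq_empty_or_nonempty
  · simp [walsh_apply]
  · rw [AddChar.sum_eq_zero_iff_ne_zero.2 (walsh_ne_zero hS), if_neg hS.ne_empty]

lemma sum_walsh_Ici (S : Finset ι) (x : ι → ZMod 2) :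
    ∑ T ∈ Ici S, walsh T x = walsh S x * ∏ i ∈ Sᶜ, (1 + signChar (x i)) := by
  have hdisj : ∀ R ∈ Sᶜ.powerset, Disjoint S R := fun R hR =>
    disjoint_left.2 fun i hiS hiR => mem_compl.1 (mem_powerset.1 hR hiR) hiS
  have hIci : Ici S = Sᶜ.powerset.image (S ∪ ·) := by
    rw [Ici_eq_Icc, top_eq_univ, Icc_eq_image_powerset (subset_univ S), compl_eq_univ_sdiff]
  rw [hIci, sum_image fun R hR R' hR' h => by
      rw [← union_sdiff_cancel_left (hdisj R hR), h, union_sdiff_cancel_left (hdisj R' hR')],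
    prod_one_add, mul_sum]
  refine sum_congr rfl fun R hR => ?_
  simp only [walsh_apply, prod_union (hdisj R hR)]

lemma two_pow_card_compl_dvd_sum_walsh_Ici (S : Finset ι) (x : ι → ZMod 2) :
    2 ^ #Sᶜ ∣ ∑ T ∈ Ici S, walsh T x := by
  rw [sum_walsh_Ici, ← prod_const]
  exact (prod_dvd_prod_of_dvd _ _ fun i _ => two_dvd_one_add_signChar (x i)).mul_left _

def walshSum (f : (ι → ZMod 2) → ℤ) (S : Finset ι) : ℤ := ∑ x, f x * walsh S x

lemma two_pow_dvd_walshSum {f : (ι → ZMod 2) → ℤ} {m : ℕ}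
    (hf : ∀ T : Finset ι, m < #T → walshSum f T = 0) (S : Finset ι) :
    2 ^ (Fintype.card ι - m) ∣ walshSum f S := by
  induction S using WellFoundedGT.induction with
  | _ S ih =>
  obtain hS | hS := lt_or_ge m #S
  · simp [hf S hS]
  have hIci : 2 ^ (Fintype.card ι - m) ∣ ∑ T ∈ Ici S, walshSum f T := by
    simp only [walshSum]
    rw [sum_comm]
    refine dvd_sum fun x _ => ?_
    rw [← mul_sum]
    exact ((pow_dvd_pow 2 (by rw [card_compl]; omega)).trans
      (two_pow_card_compl_dvd_sum_walsh_Ici S x)).mul_left _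
  have hIoi : 2 ^ (Fintype.card ι - m) ∣ ∑ T ∈ Ioi S, walshSum f T :=
    dvd_sum fun T hT => ih T (mem_Ioi.1 hT)
  rw [← Ioi_insert, sum_insert (by simp)] at hIci
  exact (dvd_add_left hIoi).1 hIci

lemma walshSum_signChar_comp (g : (ι → ZMod 2) → ZMod 2) (S : Finset ι) :
    walshSum (signChar ∘ g) S
      = (if S = ∅ then 2 ^ Fintype.card ι else 0) - 2 * walshSum (fun x => (g x).val) S := by
  simp only [walshSum, Function.comp_apply, signChar_eq_one_sub_two_mul_val, ← sum_walsh,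
    mul_sum, ← sum_sub_distrib]
  exact sum_congr rfl fun x _ => by ring

lemma two_pow_dvd_walshSum_signChar_comp {g : (ι → ZMod 2) → ZMod 2} {m : ℕ}
    (hg : ∀ T : Finset ι, m < #T → walshSum (signChar ∘ g) T = 0) (S : Finset ι) :
    2 ^ (Fintype.card ι - (m - 1)) ∣ walshSum (signChar ∘ g) S := by
  have hval : ∀ T : Finset ι, m < #T → walshSum (fun x => (g x).val) T = 0 := fun T hT => by
    have hne : T ≠ ∅ := by rintro rfl; simp at hT
    simpa [walshSum_signChar_comp, hne] using hg T hT
  rw [walshSum_signChar_comp]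
  refine dvd_sub ?_ ?_
  · split_ifs
    · exact pow_dvd_pow 2 (Nat.sub_le _ _)
    · exact dvd_zero _
  · exact (pow_dvd_pow 2 (by omega)).trans
      (pow_succ' (2 : ℤ) _ ▸ mul_dvd_mul_left 2 (two_pow_dvd_walshSum hval S))

end BooleanFourier

open BooleanFourier

lemma sgn_eq_signChar {n : ℕ} (u v : Fin n → ZMod 2) : sgn u v = signChar (u ⬝ᵥ v) := by
  rw [sgn, dotProduct]
  obtain h | h := zmod_two_eq_zero_or_one (∑ i, u i * v i) <;> simp [h, signChar_one]

lemma fc_eq_walshSum {n : ℕ} (π : Equiv.Perm (Fin n → ZMod 2)) (J I : Fin n → ZMod 2) :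
    fc π J I = walshSum (signChar ∘ fun x => π x ⬝ᵥ J) (supp I) / 2 ^ n := by
  simp only [fc, walshSum, sgn_eq_signChar, dotProduct_eq_sum_supp I,
    ← walsh_apply_eq_signChar_sum, Function.comp_apply, Int.cast_sum, Int.cast_mul, mul_comm,
    one_div_mul_eq_div]

theorem fc_nonzero_lower_bound_general {n : ℕ} (π : Equiv.Perm (Fin n → ZMod 2))
    (J : Fin n → ZMod 2) (m : ℕ)
    (hloc : ∀ I : Fin n → ZMod 2, m < wt I → fc π J I = 0) :
    ∀ g : Fin n → ZMod 2, fc π J g ≠ 0 → 1 / 2 ^ (m - 1) ≤ |fc π J g| := by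
  intro g hg
  have hdeg : ∀ T : Finset (Fin n), m < #T →
      walshSum (signChar ∘ fun x => π x ⬝ᵥ J) T = 0 := by
    intro T hT
    obtain ⟨I, rfl⟩ := supp_surjective T
    simpa [fc_eq_walshSum] using hloc I hT
  rw [fc_eq_walshSum] at hg ⊢
  refine one_div_two_pow_le_abs_div_two_pow (fun h => hg (by simp [h])) ?_
  simpa using two_pow_dvd_walshSum_signChar_comp hdeg (supp g)

/-- If all Fourier coefficients of J vanish above locality m, then every nonzero
coefficient has absolute value at least 1/2^(m-1). -/
theorem fc_nonzero_lower_bound {n : ℕ} (hn : 1 ≤ n) (π : Equiv.Perm (Fin n → ZMod 2))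
    (J : Fin n → ZMod 2) (m : ℕ) (hm : 1 ≤ m)
    (hloc : ∀ I : Fin n → ZMod 2, m < wt I → fc π J I = 0) :
    ∀ g : Fin n → ZMod 2, fc π J g ≠ 0 → 1 / 2 ^ (m - 1) ≤ |fc π J g| :=
  fc_nonzero_lower_bound_general π J m hloc
end

section
/- Fix a permutation π of V, J ∈ V, and an integer m ≥ 1. Suppose a^J_I = 0 for every I ∈ V with Hamming weight |I| > m. Then the number of nodes used is bounded by m·2^{2m−2}: the cardinality of {i ∈ Fin n : ∃ g ∈ V, a^J_g ≠ 0 ∧ g i = 1} is at most m·2^{2m−2}. -/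
open Finset

/-!
The Fourier coefficients `a_I` of the Boolean function `x ↦ (-1)^{π(x)·J}` satisfy Parseval,
`∑ a_I² = 1`, so the total influence `∑ᵢ Infᵢ = ∑ |I| a_I²` is at most `m`. They are also
granular: writing the Walsh–Hadamard matrix as `H^{⊗n} = (HZ)^{⊗n} μ^{⊗n}` with `Z`, `μ` the
zeta and Möbius matrices of `0 < 1`, the integer Möbius coefficients `μ^{⊗n} g` vanish above degree
`m` (because `μH` is upper triangular), while column `S` of `(HZ)^{⊗n}` is divisible by
`2^{n-|S|}`. Hence every nonzero `a_I` has `a_I² ≥ 2^{2-2m}`, every node has influence at least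
`2^{2-2m}`, and there are at most `m·2^{2m-2}` nodes.
-/

open scoped Matrix

namespace Matrix

def kronPow {α R : Type*} [CommMonoid R] (ι : Type*) [Fintype ι] (A : Matrix α α R) :
    Matrix (ι → α) (ι → α) R :=
  of fun u v => ∏ i, A (u i) (v i)

variable {ι α R : Type*} [Fintype ι]

@[simp]
lemma kronPow_apply [CommMonoid R] (A : Matrix α α R) (u v : ι → α) :
    kronPow ι A u v = ∏ i, A (u i) (v i) := rfl

lemma kronPow_mul [Fintype α] [DecidableEq ι] [CommSemiring R] (A B : Matrix α α R) :
    kronPow ι A * kronPow ι B = kronPow ι (A * B) := by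
  ext u v
  simp only [mul_apply, kronPow_apply, ← prod_mul_distrib]
  exact (Fintype.prod_sum fun i c => A (u i) c * B c (v i)).symm

lemma kronPow_smul [CommMonoid R] (c : R) (A : Matrix α α R) :
    kronPow ι (c • A) = c ^ Fintype.card ι • kronPow ι A := by
  ext u v
  simp [prod_mul_distrib]

lemma kronPow_one [DecidableEq ι] [DecidableEq α] [CommMonoidWithZero R] :
    kronPow ι (1 : Matrix α α R) = 1 := by
  ext u v
  simp only [kronPow_apply, one_apply, prod_ite_zero, prod_const_one, funext_iff, mem_univ,
    true_imp_iff]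

lemma kronPow_transpose [CommMonoid R] (A : Matrix α α R) :
    (kronPow ι A)ᵀ = kronPow ι Aᵀ := rfl

end Matrix

namespace BooleanCube

open Matrix

variable {n : ℕ}

def signChar : AddChar (ZMod 2) ℤ where
  toFun a := if a = 1 then -1 else 1
  map_zero_eq_one' := by decide
  map_add_eq_mul' := by decide

lemma signChar_apply (a : ZMod 2) : signChar a = if a = 1 then -1 else 1 := rfl

lemma signChar_eq_one_sub (a : ZMod 2) : signChar a = 1 - 2 * (a.val : ℤ) := by
  revert a; decide

lemma signChar_mul_self (a : ZMod 2) : signChar a * signChar a = 1 := by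
  revert a; decide

lemma signChar_sum {κ : Type*} (s : Finset κ) (f : κ → ZMod 2) :
    signChar (∑ i ∈ s, f i) = ∏ i ∈ s, signChar (f i) := by
  induction s using Finset.cons_induction with
  | empty => simp
  | cons a s ha ih => rw [sum_cons, prod_cons, signChar.map_add_eq_mul, ih]

def hadamard : Matrix (ZMod 2) (ZMod 2) ℤ := of fun a b => signChar (a * b)

/-- `zeta a b = [b ≤ a]`, the zeta function of the chain `0 < 1`. -/
def zeta : Matrix (ZMod 2) (ZMod 2) ℤ := of ![![1, 0], ![1, 1]]

def moebius : Matrix (ZMod 2) (ZMod 2) ℤ := of ![![1, 0], ![-1, 1]]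

lemma zeta_mul_moebius : zeta * moebius = 1 := by decide

lemma hadamard_mul_self : hadamard * hadamard = (2 : ℤ) • 1 := by decide

lemma hadamard_transpose : hadamardᵀ = hadamard := by decide

lemma two_dvd_hadamard_mul_zeta_zero (a : ZMod 2) : 2 ∣ (hadamard * zeta) a 0 := by
  revert a; decide

lemma moebius_mul_hadamard_one_zero : (moebius * hadamard) 1 0 = 0 := by decide

abbrev walsh (n : ℕ) : Matrix (Fin n → ZMod 2) (Fin n → ZMod 2) ℤ :=
  kronPow (Fin n) hadamard

lemma walsh_apply (u v : Fin n → ZMod 2) : walsh n u v = signChar (u ⬝ᵥ v) := by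
  simp only [kronPow_apply, hadamard, of_apply, dotProduct, signChar_sum]

lemma walsh_transpose : (walsh n)ᵀ = walsh n := by
  rw [kronPow_transpose, hadamard_transpose]

lemma walsh_mul_self : walsh n * walsh n = (2 : ℤ) ^ n • 1 := by
  rw [kronPow_mul, hadamard_mul_self, kronPow_smul, kronPow_one, Fintype.card_fin]

lemma walsh_eq_mul_moebius :
    walsh n = kronPow (Fin n) (hadamard * zeta) * kronPow (Fin n) moebius := by
  rw [kronPow_mul, mul_assoc, zeta_mul_moebius, mul_one]

lemma dotProduct_walsh_mulVec_self (g : (Fin n → ZMod 2) → ℤ) :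
    (walsh n *ᵥ g) ⬝ᵥ (walsh n *ᵥ g) = 2 ^ n * (g ⬝ᵥ g) := by
  rw [dotProduct_mulVec, ← walsh_transpose, vecMul_transpose, walsh_transpose, mulVec_mulVec,
    walsh_mul_self, smul_mulVec, one_mulVec, smul_dotProduct, smul_eq_mul]

lemma walsh_mulVec_one : walsh n *ᵥ 1 = (2 : ℤ) ^ n • Pi.single 0 1 := by
  have hcol : walsh n *ᵥ Pi.single 0 1 = 1 := by
    ext x
    simp [mulVec_single, hadamard, signChar_apply]
  rw [← hcol, mulVec_mulVec, walsh_mul_self, smul_mulVec, one_mulVec]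

lemma zmod_two_eq_one_of_ne_zero {a : ZMod 2} (h : a ≠ 0) : a = 1 := by
  revert a; decide

lemma wt_le_wt_of_kronPow_ne_zero {A : Matrix (ZMod 2) (ZMod 2) ℤ} (hA : A 1 0 = 0)
    {S I : Fin n → ZMod 2} (h : kronPow (Fin n) A S I ≠ 0) : wt S ≤ wt I := by
  rw [kronPow_apply, prod_ne_zero_iff] at h
  refine card_le_card fun i hi => ?_
  simp only [mem_filter, mem_univ, true_and] at hi ⊢
  refine zmod_two_eq_one_of_ne_zero fun hI => h i (mem_univ i) ?_
  rw [hi, hI, hA]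

lemma two_pow_wt (S : Fin n → ZMod 2) : (2 : ℤ) ^ wt S = ∏ i, if S i = 1 then 2 else 1 := by
  rw [← prod_filter, prod_const, wt]

lemma two_pow_dvd_two_pow_wt_mul_kronPow {A : Matrix (ZMod 2) (ZMod 2) ℤ}
    (hA : ∀ a, 2 ∣ A a 0) (I S : Fin n → ZMod 2) :
    2 ^ n ∣ 2 ^ wt S * kronPow (Fin n) A I S := by
  rw [show (2 : ℤ) ^ n = ∏ _i : Fin n, 2 by simp, two_pow_wt, kronPow_apply,
    ← prod_mul_distrib]
  refine prod_dvd_prod_of_dvd _ _ fun i _ => ?_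
  split_ifs with hS
  · exact dvd_mul_right 2 _
  · rw [one_mul, not_imp_comm.mp zmod_two_eq_one_of_ne_zero hS]
    exact hA _

lemma kronPow_moebius_mulVec_eq_zero {m : ℕ} {g : (Fin n → ZMod 2) → ℤ}
    (hg : ∀ S, m < wt S → (walsh n *ᵥ g) S = 0) {S : Fin n → ZMod 2} (hS : m < wt S) :
    (kronPow (Fin n) moebius *ᵥ g) S = 0 := by
  have hinv : (2 : ℤ) ^ n • (kronPow (Fin n) moebius *ᵥ g)
      = kronPow (Fin n) (moebius * hadamard) *ᵥ (walsh n *ᵥ g) := by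
    rw [← kronPow_mul, ← mulVec_mulVec, mulVec_mulVec g, walsh_mul_self, smul_mulVec,
      one_mulVec, mulVec_smul]
  have hS' := congrFun hinv S
  rw [Pi.smul_apply, smul_eq_mul] at hS'
  refine (mul_eq_zero.mp (hS'.trans (sum_eq_zero fun I _ => ?_))).resolve_left (by positivity)
  dsimp only
  by_cases hSI : kronPow (Fin n) (moebius * hadamard) S I = 0
  · rw [hSI, zero_mul]
  · rw [hg I (hS.trans_le (wt_le_wt_of_kronPow_ne_zero moebius_mul_hadamard_one_zero hSI)),
      mul_zero]

theorem two_pow_dvd_two_pow_mul_walsh_mulVec {m : ℕ} {g : (Fin n → ZMod 2) → ℤ}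
    (hg : ∀ S, m < wt S → (walsh n *ᵥ g) S = 0) (I : Fin n → ZMod 2) :
    2 ^ n ∣ 2 ^ m * (walsh n *ᵥ g) I := by
  rw [walsh_eq_mul_moebius, ← mulVec_mulVec, mulVec, dotProduct, mul_sum]
  refine dvd_sum fun S _ => ?_
  by_cases hS : m < wt S
  · rw [kronPow_moebius_mulVec_eq_zero hg hS, mul_zero, mul_zero]
    exact dvd_zero _
  · rw [← mul_assoc]
    refine dvd_mul_of_dvd_left ((two_pow_dvd_two_pow_wt_mul_kronPow
      two_dvd_hadamard_mul_zeta_zero I S).trans ?_) _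
    exact mul_dvd_mul_right (pow_dvd_pow 2 (not_lt.mp hS)) _

lemma wt_zero : wt (0 : Fin n → ZMod 2) = 0 := by
  simp [wt]

theorem two_pow_succ_dvd_two_pow_mul_walsh_mulVec_signChar {m : ℕ} (hm : 1 ≤ m)
    {f : (Fin n → ZMod 2) → ZMod 2}
    (hf : ∀ S, m < wt S → (walsh n *ᵥ (signChar ∘ f)) S = 0) (I : Fin n → ZMod 2) :
    2 ^ (n + 1) ∣ 2 ^ m * (walsh n *ᵥ (signChar ∘ f)) I := by
  set G : (Fin n → ZMod 2) → ℤ := fun x => (f x).val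
  have hsplit : walsh n *ᵥ (signChar ∘ f)
      = (2 : ℤ) ^ n • Pi.single 0 1 - (2 : ℤ) • (walsh n *ᵥ G) := by
    have hsign : signChar ∘ f = 1 - (2 : ℤ) • G := funext fun x => signChar_eq_one_sub (f x)
    rw [hsign, mulVec_sub, mulVec_smul, walsh_mulVec_one]
  have hG : ∀ S, m < wt S → (walsh n *ᵥ G) S = 0 := by
    intro S hS
    have hS0 : S ≠ 0 := by rintro rfl; rw [wt_zero] at hS; omega
    simpa [hsplit, Pi.single_apply, hS0] using hf S hS
  rw [hsplit, Pi.sub_apply, mul_sub]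
  refine dvd_sub ?_ ?_
  · simp only [Pi.smul_apply, smul_eq_mul, ← mul_assoc, ← pow_add]
    exact dvd_mul_of_dvd_left (pow_dvd_pow 2 (by omega)) _
  · rw [Pi.smul_apply, smul_eq_mul, mul_left_comm, pow_succ']
    exact mul_dvd_mul_left 2 (two_pow_dvd_two_pow_mul_walsh_mulVec hG I)

noncomputable def influence (a : (Fin n → ZMod 2) → ℝ) (i : Fin n) : ℝ :=
  ∑ I with I i = 1, a I ^ 2

lemma sum_influence (a : (Fin n → ZMod 2) → ℝ) :
    ∑ i, influence a i = ∑ I, wt I * a I ^ 2 := by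
  simp only [influence, sum_filter]
  rw [sum_comm]
  refine sum_congr rfl fun I _ => ?_
  rw [← sum_filter, sum_const, nsmul_eq_mul, wt]

lemma sq_le_influence (a : (Fin n → ZMod 2) → ℝ) {I : Fin n → ZMod 2} {i : Fin n}
    (hI : I i = 1) : a I ^ 2 ≤ influence a i :=
  single_le_sum (f := fun I => a I ^ 2) (fun _ _ => sq_nonneg _) (by simpa using hI)

theorem card_mul_le_of_sum_sq_eq_one {m : ℕ} {a : (Fin n → ZMod 2) → ℝ} {δ : ℝ}
    (hsum : ∑ I, a I ^ 2 = 1) (hdeg : ∀ I, m < wt I → a I = 0)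
    (hgap : ∀ I, a I ≠ 0 → δ ≤ a I ^ 2) (P : Finset (Fin n))
    (hP : ∀ i ∈ P, ∃ g, a g ≠ 0 ∧ g i = 1) :
    #P * δ ≤ m := by
  have hnode : ∀ i ∈ P, δ ≤ influence a i := by
    intro i hi
    obtain ⟨g, hg, hgi⟩ := hP i hi
    exact (hgap g hg).trans (sq_le_influence a hgi)
  have hwt : ∀ I, wt I * a I ^ 2 ≤ m * a I ^ 2 := by
    intro I
    by_cases hI : m < wt I
    · simp [hdeg I hI]
    · exact mul_le_mul_of_nonneg_right (by exact_mod_cast not_lt.mp hI) (sq_nonneg _)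
  calc #P * δ ≤ ∑ i ∈ P, influence a i := by
        simpa using card_nsmul_le_sum P (influence a) δ hnode
    _ ≤ ∑ i, influence a i :=
        sum_le_sum_of_subset_of_nonneg (subset_univ P) fun _ _ _ =>
          sum_nonneg fun _ _ => sq_nonneg _
    _ = ∑ I, wt I * a I ^ 2 := sum_influence a
    _ ≤ ∑ I, m * a I ^ 2 := sum_le_sum fun I _ => hwt I
    _ = m := by rw [← mul_sum, hsum, mul_one]

lemma sgn_eq_signChar (u v : Fin n → ZMod 2) : sgn u v = signChar (u ⬝ᵥ v) := by
  rw [sgn, signChar_apply, dotProduct]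
  split <;> simp

lemma fc_eq_walsh_mulVec (π : Equiv.Perm (Fin n → ZMod 2)) (J I : Fin n → ZMod 2) :
    fc π J I = (walsh n *ᵥ (signChar ∘ fun x => π x ⬝ᵥ J)) I / 2 ^ n := by
  rw [fc, mulVec, dotProduct, Int.cast_sum, one_div_mul_eq_div]
  simp only [Int.cast_mul, walsh_apply, Function.comp_apply, sgn_eq_signChar]

lemma sum_fc_sq (π : Equiv.Perm (Fin n → ZMod 2)) (J : Fin n → ZMod 2) :
    ∑ I, fc π J I ^ 2 = 1 := by
  set F : (Fin n → ZMod 2) → ℤ := signChar ∘ fun x => π x ⬝ᵥ J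
  have hF : F ⬝ᵥ F = 2 ^ n := by
    simp [F, dotProduct, signChar_mul_self]
  have hsum : ∑ I, ((walsh n *ᵥ F) I : ℝ) ^ 2 = ((2 ^ n * 2 ^ n : ℤ) : ℝ) := by
    rw [show (2 : ℤ) ^ n * 2 ^ n = 2 ^ n * (F ⬝ᵥ F) by rw [hF], ← dotProduct_walsh_mulVec_self,
      dotProduct]
    push_cast
    simp only [sq]
  simp_rw [fc_eq_walsh_mulVec, div_pow]
  rw [← sum_div, hsum]
  push_cast
  field_simp

lemma one_div_le_fc_sq (π : Equiv.Perm (Fin n → ZMod 2)) (J : Fin n → ZMod 2) {m : ℕ}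
    (hm : 1 ≤ m) (hloc : ∀ I, m < wt I → fc π J I = 0) {I : Fin n → ZMod 2}
    (hI : fc π J I ≠ 0) : 1 / 2 ^ (2 * m - 2) ≤ fc π J I ^ 2 := by
  set w := walsh n *ᵥ (signChar ∘ fun x => π x ⬝ᵥ J)
  have hw : ∀ S, fc π J S = 0 ↔ w S = 0 := by
    simp [fc_eq_walsh_mulVec, w]
  have hdvd := two_pow_succ_dvd_two_pow_mul_walsh_mulVec_signChar hm
    (fun S hS => (hw S).1 (hloc S hS)) I
  have hsq : ((2 : ℤ) ^ (n + 1)) ^ 2 ≤ (2 ^ m * w I) ^ 2 :=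
    Int.natAbs_le_iff_sq_le.1 (Int.natAbs_le_of_dvd_ne_zero hdvd
      (mul_ne_zero (by positivity) ((hw I).not.1 hI)))
  obtain ⟨k, rfl⟩ := Nat.exists_eq_add_of_le' hm
  have hsqR : ((2 : ℝ) ^ (n + 1)) ^ 2 ≤ (2 ^ (k + 1) * w I) ^ 2 := by exact_mod_cast hsq
  rw [show 2 * (k + 1) - 2 = 2 * k by omega, fc_eq_walsh_mulVec, div_pow,
    div_le_div_iff₀ (by positivity) (by positivity)]
  have hlhs : ((2 : ℝ) ^ (n + 1)) ^ 2 = 4 * (1 * (2 ^ n) ^ 2) := by ring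
  have hrhs : (2 ^ (k + 1) * (w I : ℝ)) ^ 2 = 4 * ((w I : ℝ) ^ 2 * 2 ^ (2 * k)) := by ring
  linarith

end BooleanCube

open Classical in
theorem fc_nodes_bound_general {n : ℕ} (π : Equiv.Perm (Fin n → ZMod 2))
    (J : Fin n → ZMod 2) (m : ℕ) (hm : 1 ≤ m)
    (hloc : ∀ I : Fin n → ZMod 2, m < wt I → fc π J I = 0) :
    (Finset.univ.filter
        (fun i : Fin n => ∃ g : Fin n → ZMod 2, fc π J g ≠ 0 ∧ g i = 1)).card
      ≤ m * 2 ^ (2 * m - 2) := by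
  have hcount := BooleanCube.card_mul_le_of_sum_sq_eq_one (BooleanCube.sum_fc_sq π J) hloc
    (fun I => BooleanCube.one_div_le_fc_sq π J hm hloc)
    (univ.filter fun i => ∃ g, fc π J g ≠ 0 ∧ g i = 1) fun i hi => (mem_filter.mp hi).2
  rw [mul_one_div, div_le_iff₀ (by positivity)] at hcount
  exact_mod_cast hcount

open Classical in
/-- If all Fourier coefficients of J vanish above locality m, then the number of
nodes (bits used by some nonzero coefficient) is at most m·2^(2m-2) (bound B_m). -/
theorem fc_nodes_bound {n : ℕ} (hn : 1 ≤ n) (π : Equiv.Perm (Fin n → ZMod 2))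
    (J : Fin n → ZMod 2) (m : ℕ) (hm : 1 ≤ m)
    (hloc : ∀ I : Fin n → ZMod 2, m < wt I → fc π J I = 0) :
    (Finset.univ.filter
        (fun i : Fin n => ∃ g : Fin n → ZMod 2, fc π J g ≠ 0 ∧ g i = 1)).card
      ≤ m * 2 ^ (2 * m - 2) :=
  fc_nodes_bound_general π J m hm hloc
end
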